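/- For all integers ℓ ≥ 0 and 0 ≤ m ≤ ℓ, the associated Legendre function satisfies sup_{x ∈ [−1,1]} |P_ℓ^m(x)| ≤ (ℓ+m)! / (2^m · m! · (ℓ−m)!). -/
import Mathlib


open Real

/-- The associated Legendre function
`P_ℓ^m(x) = ((−1)^m/(2^ℓ ℓ!)) (1−x²)^{m/2} d^{ℓ+m}/dx^{ℓ+m}[(x²−1)^ℓ]`. -/
noncomputable def assocLegendre (l m : ℕ) (x : ℝ) : ℝ :=
  ((-1 : ℝ) ^ m / (2 ^ l * (Nat.factorial l : ℝ))) * (1 - x ^ 2) ^ ((m : ℝ) / 2) *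
    iteratedDeriv (l + m) (fun y : ℝ => (y ^ 2 - 1) ^ l) x

section Aux

open Polynomial

private lemma polyEval_iteratedDeriv (r : Polynomial ℝ) (n : ℕ) (x : ℝ) :
    iteratedDeriv n (fun y : ℝ => r.eval y) x = (derivative^[n] r).eval x := by
  induction n generalizing r x with
  | zero => simp
  | succ n ih =>
    rw [iteratedDeriv_succ', Function.iterate_succ_apply]
    have h : deriv (fun y : ℝ => r.eval y) = fun y : ℝ => (derivative r).eval y := by
      funext y; exact (r.hasDerivAt y).deriv
    rw [h, ih]

private lemma baseId (l : ℕ) :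
    ((X:ℝ[X])^2 - 1) * derivative ((X^2 - 1)^l) = (2*(l:ℝ[X])) * (X * (X^2-1)^l) := by
  cases l with
  | zero => simp
  | succ k =>
    rw [derivative_pow]
    simp only [derivative_sub, derivative_one, derivative_X_pow, Nat.cast_ofNat, map_natCast,
      Nat.add_sub_cancel, sub_zero, Nat.cast_succ, map_add, map_one, map_ofNat]
    push_cast
    ring

private lemma Tlem (l : ℕ) : ∀ n : ℕ,
    ((X:ℝ[X])^2 - 1) * derivative^[n+2] ((X^2 - 1)^l) =
      (2*(l:ℝ[X]) - 2*(n:ℝ[X]) - 2) * (X * derivative^[n+1] ((X^2 - 1)^l)) +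
        (((n:ℝ[X])+1) * (2*(l:ℝ[X]) - (n:ℝ[X]))) * derivative^[n] ((X^2 - 1)^l) := by
  intro n
  induction n with
  | zero =>
    have hb := congrArg derivative (baseId l)
    simp only [derivative_mul, derivative_sub, derivative_one, derivative_X_pow, derivative_X,
      derivative_natCast, derivative_ofNat, Nat.cast_ofNat, map_ofNat, sub_zero, zero_mul,
      mul_one, one_mul, zero_add, add_zero, Nat.cast_zero] at hb ⊢
    rw [show (2:ℕ)-1 = 1 by rfl, pow_one] at hb
    simp only [Function.iterate_succ_apply', Function.iterate_zero_apply] at *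
    linear_combination hb
  | succ k ih =>
    have hb := congrArg derivative ih
    simp only [derivative_mul, derivative_add, derivative_sub, derivative_one, derivative_X_pow,
      derivative_X, derivative_natCast, derivative_ofNat, Nat.cast_ofNat, map_ofNat, sub_zero,
      zero_mul, mul_one, one_mul, zero_add, add_zero, zero_sub, Nat.cast_succ] at hb ⊢
    rw [show (2:ℕ)-1 = 1 by rfl, pow_one] at hb
    simp only [Function.iterate_succ_apply'] at *
    linear_combination hb

private lemma derivH_abstract (L M q : ℝ[X]) (hL : derivative L = 0) (hM : derivative M = 0)
    (ode : ((X:ℝ[X])^2 - 1) * derivative (derivative q) =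
      (2*L - 2*(L+M) - 2) * (X * derivative q) + ((L+M+1) * (2*L - (L+M))) * q) :
    derivative (((L+M+1) * (L-M)) * q^2 + (1 - X^2) * (derivative q)^2) =
      (4*M+2) * (X * (derivative q)^2) := by
  simp only [derivative_add, derivative_mul, derivative_sub, derivative_one, derivative_X_pow,
    derivative_X, hL, hM, derivative_pow, Nat.cast_ofNat, map_ofNat, sub_zero, zero_mul,
    mul_one, one_mul, zero_add, add_zero, zero_sub]
  rw [show (2:ℕ)-1 = 1 by rfl, pow_one]
  linear_combination (-2 * derivative q) * ode

private lemma derivH (l m : ℕ) :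
    derivative ((((l:ℝ[X])+(m:ℝ[X])+1) * ((l:ℝ[X])-(m:ℝ[X]))) * (derivative^[l+m] ((X^2-1)^l))^2
        + (1 - X^2) * (derivative^[l+m+1] ((X^2-1)^l))^2) =
      (4*(m:ℝ[X])+2) * (X * (derivative^[l+m+1] ((X^2-1)^l))^2) := by
  have ode := Tlem l (l+m)
  push_cast at ode
  rw [Function.iterate_succ_apply']
  rw [show l+m+2 = (l+m+1)+1 by rfl, Function.iterate_succ_apply',
    Function.iterate_succ_apply'] at ode
  exact derivH_abstract _ _ _ (derivative_natCast) (derivative_natCast) ode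

private lemma parity (l n : ℕ) :
    (derivative^[n] ((X^2-1:ℝ[X])^l)).comp (-X) = (-1:ℝ[X])^n * derivative^[n] ((X^2-1)^l) := by
  induction n with
  | zero => simp [sub_comp, pow_comp, one_comp, X_comp, neg_sq]
  | succ n ih =>
    rw [Function.iterate_succ_apply']
    have h := derivative_comp ((derivative^[n] ((X^2-1:ℝ[X])^l))) (-X)
    rw [ih] at h
    simp only [derivative_neg, derivative_X, derivative_mul, derivative_pow, derivative_one,
      neg_zero, mul_zero, zero_mul, zero_add, neg_mul, one_mul] at h
    linear_combination h

private lemma eval_neg_one (l n : ℕ) :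
    (derivative^[n] ((X^2-1:ℝ[X])^l)).eval (-1) = (-1:ℝ)^n * (derivative^[n] ((X^2-1)^l)).eval 1 := by
  have h := congrArg (eval (1:ℝ)) (parity l n)
  simpa [eval_comp] using h

private lemma eval_one_q (l m : ℕ) (hm : m ≤ l) :
    (derivative^[l+m] ((X^2-1:ℝ[X])^l)).eval 1 =
      ((l+m).choose m * (l.factorial * (l.descFactorial m * 2^(l-m))) : ℕ) := by
  have hfac : ((X:ℝ[X])^2 - 1)^l = (X - C 1)^l * (X + C 1)^l := by
    rw [← mul_pow]; ring_nf; rw [C_1]; ring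
  rw [hfac, iterate_derivative_mul, eval_finset_sum]
  rw [Finset.sum_eq_single m]
  · rw [show l + m - m = l by omega]
    simp only [iterate_derivative_X_sub_pow, iterate_derivative_X_add_pow, smul_mul_assoc,
      eval_smul, eval_mul, eval_pow, eval_sub, eval_add, eval_one, eval_X, Nat.sub_self,
      pow_zero, smul_eq_mul, Nat.descFactorial_self, eval_C]
    push_cast
    norm_num
  · intro k hk hne
    simp only [iterate_derivative_X_sub_pow, iterate_derivative_X_add_pow, smul_mul_assoc,
      eval_smul, eval_mul, eval_pow, eval_sub, eval_add, eval_one, eval_X, eval_C, smul_eq_mul]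
    rcases lt_or_gt_of_ne hne with h | h
    · rw [Nat.descFactorial_of_lt (show l < l+m-k by omega)]
      simp
    · have hklm : k ≤ l + m := by have := Finset.mem_range.1 hk; omega
      rw [show (1:ℝ) - 1 = 0 by ring, zero_pow (show l - (l+m-k) ≠ 0 by omega)]
      simp
  · intro hmem
    exact absurd (Finset.mem_range.2 (by omega)) hmem

private lemma key_bound (l m : ℕ) (hm : m ≤ l) (x : ℝ) (hx : x ∈ Set.Icc (-1:ℝ) 1) :
    |(derivative^[l+m] ((X^2-1:ℝ[X])^l)).eval x| ≤ |(derivative^[l+m] ((X^2-1:ℝ[X])^l)).eval 1| := by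
  obtain ⟨hx1, hx2⟩ := hx
  rcases eq_or_lt_of_le hm with heq | hlt
  · have hz : derivative^[l+m+1] ((X^2-1:ℝ[X])^l) = 0 := by
      apply iterate_derivative_eq_zero
      have h1 : ((X^2-1:ℝ[X])^l).natDegree ≤ l * 2 := by
        have h0 := natDegree_pow_le (p := ((X:ℝ[X])^2-1)) (n := l)
        have h2 : ((X:ℝ[X])^2-1).natDegree ≤ 2 := by
          have h3 : ((X:ℝ[X])^2 - C 1).natDegree = 2 := natDegree_X_pow_sub_C
          simp only [C_1] at h3
          omega
        calc ((X^2-1:ℝ[X])^l).natDegree ≤ l * ((X:ℝ[X])^2-1).natDegree := h0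
          _ ≤ l * 2 := Nat.mul_le_mul_left l h2
      omega
    have hconst := (Function.iterate_succ_apply' derivative (l+m)
      ((X^2-1:ℝ[X])^l)).symm.trans hz
    rw [eq_C_of_derivative_eq_zero hconst]
    simp
  · have hqneg := eval_neg_one l (l+m)
    set q : ℝ[X] := derivative^[l+m] ((X^2-1:ℝ[X])^l) with hq
    set q' : ℝ[X] := derivative^[l+m+1] ((X^2-1:ℝ[X])^l) with hq'
    set K : ℝ := ((l:ℝ)+m+1) * ((l:ℝ)-m) with hK
    have hKpos : 0 < K := by
      rw [hK]
      apply mul_pos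
      · positivity
      · have : (m:ℝ) < l := by exact_mod_cast hlt
        linarith
    set H : ℝ[X] := (((l:ℝ[X])+(m:ℝ[X])+1) * ((l:ℝ[X])-(m:ℝ[X]))) * q^2 + (1 - X^2) * q'^2
      with hH
    have hHev : ∀ y : ℝ, H.eval y = K * (q.eval y)^2 + (1 - y^2) * (q'.eval y)^2 := by
      intro y
      simp [hH, hK, eval_mul, eval_add, eval_sub, eval_pow, eval_natCast, eval_one, eval_X]
    have hderiv : ∀ y : ℝ, deriv (fun z => H.eval z) y = (4*(m:ℝ)+2) * (y * (q'.eval y)^2) := by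
      intro y
      rw [Polynomial.deriv, hH, hq, hq', derivH l m]
      simp [eval_mul, eval_add, eval_natCast, eval_pow, eval_X]
    have hmono : MonotoneOn (fun z => H.eval z) (Set.Icc (0:ℝ) 1) := by
      apply monotoneOn_of_deriv_nonneg (convex_Icc _ _)
        ((Polynomial.continuous H).continuousOn)
        ((Polynomial.differentiable H).differentiableOn)
      intro y hy
      rw [interior_Icc] at hy
      rw [hderiv]
      have : 0 ≤ y := le_of_lt hy.1
      positivity
    have hanti : AntitoneOn (fun z => H.eval z) (Set.Icc (-1:ℝ) 0) := by
      apply antitoneOn_of_deriv_nonpos (convex_Icc _ _)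
        ((Polynomial.continuous H).continuousOn)
        ((Polynomial.differentiable H).differentiableOn)
      intro y hy
      rw [interior_Icc] at hy
      rw [hderiv]
      exact mul_nonpos_of_nonneg_of_nonpos (by positivity)
        (mul_nonpos_of_nonpos_of_nonneg (le_of_lt hy.2) (sq_nonneg _))
    have hsq1 : ((-1:ℝ)^(l+m))^2 = 1 := by
      rw [← pow_mul, mul_comm, pow_mul, neg_one_sq, one_pow]
    have hend : H.eval 1 = K * (q.eval 1)^2 := by rw [hHev]; ring
    have hendm : H.eval (-1) = K * (q.eval 1)^2 := by
      rw [hHev, hqneg, mul_pow, hsq1]; norm_num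
    have hle : H.eval x ≤ K * (q.eval 1)^2 := by
      rcases le_total x 0 with h0 | h0
      · have h := hanti (Set.mem_Icc.2 ⟨le_refl (-1:ℝ), by norm_num⟩)
          (Set.mem_Icc.2 ⟨hx1, h0⟩) hx1
        exact h.trans hendm.le
      · have h := hmono (Set.mem_Icc.2 ⟨h0, hx2⟩)
          (Set.mem_Icc.2 ⟨zero_le_one, le_refl (1:ℝ)⟩) hx2
        exact h.trans hend.le
    have hlow : K * (q.eval x)^2 ≤ H.eval x := by
      rw [hHev]
      have h1x : 0 ≤ 1 - x^2 := by nlinarith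
      nlinarith [mul_nonneg h1x (sq_nonneg (q'.eval x))]
    have hsq : (q.eval x)^2 ≤ (q.eval 1)^2 :=
      le_of_mul_le_mul_left (hlow.trans hle) hKpos
    calc |q.eval x| = Real.sqrt ((q.eval x)^2) := (Real.sqrt_sq_eq_abs _).symm
      _ ≤ Real.sqrt ((q.eval 1)^2) := Real.sqrt_le_sqrt hsq
      _ = |q.eval 1| := Real.sqrt_sq_eq_abs _

end Aux

/-- For all `0 ≤ m ≤ ℓ`,
`sup_{x ∈ [−1,1]} |P_ℓ^m(x)| ≤ (ℓ+m)! / (2^m m! (ℓ−m)!)`. -/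
theorem statement2 (l m : ℕ) (hm : m ≤ l) :
    ∀ x ∈ Set.Icc (-1 : ℝ) 1,
      |assocLegendre l m x| ≤
        (Nat.factorial (l + m) : ℝ) /
          (2 ^ m * (Nat.factorial m : ℝ) * (Nat.factorial (l - m) : ℝ)) := by
  intro x hx
  obtain ⟨hx1, hx2⟩ := hx
  have h1x : (0:ℝ) ≤ 1 - x^2 := by nlinarith
  have hfun : (fun y : ℝ => (y^2-1)^l) = fun y : ℝ => (((Polynomial.X:Polynomial ℝ)^2-1)^l).eval y := by
    funext y; simp
  have hiter : iteratedDeriv (l + m) (fun y : ℝ => (y ^ 2 - 1) ^ l) x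
      = ((Polynomial.derivative)^[l+m] (((Polynomial.X:Polynomial ℝ)^2-1)^l)).eval x := by
    rw [hfun, polyEval_iteratedDeriv]
  set g1 : ℝ := ((Polynomial.derivative)^[l+m] (((Polynomial.X:Polynomial ℝ)^2-1)^l)).eval 1
  set gx : ℝ := ((Polynomial.derivative)^[l+m] (((Polynomial.X:Polynomial ℝ)^2-1)^l)).eval x
  have hg1 : g1 = ((l+m).choose m * (l.factorial * (l.descFactorial m * 2^(l-m))) : ℕ) :=
    eval_one_q l m hm
  have hkey : |gx| ≤ |g1| := key_bound l m hm x ⟨hx1, hx2⟩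
  have hg1abs : |g1| = ((l+m).choose m * (l.factorial * (l.descFactorial m * 2^(l-m))) : ℕ) := by
    rw [hg1, abs_of_nonneg (Nat.cast_nonneg _)]
  have hs0 : (0:ℝ) ≤ (1 - x^2) ^ ((m:ℝ)/2) := Real.rpow_nonneg h1x _
  have hs1 : (1 - x^2) ^ ((m:ℝ)/2) ≤ 1 :=
    Real.rpow_le_one h1x (by nlinarith) (by positivity)
  have hlfac : (0:ℝ) < 2 ^ l * (Nat.factorial l : ℝ) := by positivity
  have habs : |assocLegendre l m x|
      = (1 / (2 ^ l * (Nat.factorial l : ℝ))) * ((1 - x^2) ^ ((m:ℝ)/2) * |gx|) := by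
    rw [assocLegendre, hiter]
    rw [abs_mul, abs_mul, abs_div, abs_pow, abs_neg, abs_one, one_pow,
      abs_of_pos hlfac, abs_of_nonneg hs0]
    ring
  rw [habs]
  have hbound : (1 / (2 ^ l * (Nat.factorial l : ℝ))) * ((1 - x^2) ^ ((m:ℝ)/2) * |gx|)
      ≤ (1 / (2 ^ l * (Nat.factorial l : ℝ))) * (1 * |g1|) := by
    apply mul_le_mul_of_nonneg_left _ (by positivity)
    exact mul_le_mul hs1 hkey (abs_nonneg _) zero_le_one
  refine hbound.trans ?_
  rw [one_mul, hg1abs]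
  -- final arithmetic
  have hNat : (l+m).choose m * (l.factorial * (l.descFactorial m * 2^(l-m)))
      * (2^m * m.factorial * (l-m).factorial)
      = (l+m).factorial * (2^l * l.factorial) := by
    calc (l+m).choose m * (l.factorial * (l.descFactorial m * 2^(l-m)))
          * (2^m * m.factorial * (l-m).factorial)
        = ((l+m).choose m * m.factorial * (l+m-m).factorial)
            * ((l-m).factorial * l.descFactorial m) * (2^(l-m) * 2^m) := by
          rw [Nat.add_sub_cancel]; ring
      _ = (l+m).factorial * l.factorial * 2^l := by
          rw [Nat.choose_mul_factorial_mul_factorial (Nat.le_add_left m l),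
            Nat.factorial_mul_descFactorial hm, ← pow_add, Nat.sub_add_cancel hm]
      _ = (l+m).factorial * (2^l * l.factorial) := by ring
  rw [div_mul_eq_mul_div, one_mul, div_le_div_iff₀ hlfac (by positivity)]
  apply le_of_eq
  calc ((((l+m).choose m * (l.factorial * (l.descFactorial m * 2^(l-m))) : ℕ)):ℝ)
        * (2 ^ m * (Nat.factorial m : ℝ) * (Nat.factorial (l - m) : ℝ))
      = (((l+m).choose m * (l.factorial * (l.descFactorial m * 2^(l-m)))
          * (2^m * m.factorial * (l-m).factorial) : ℕ) : ℝ) := by push_cast; ring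
    _ = (((l+m).factorial * (2^l * l.factorial) : ℕ) : ℝ) := by rw [hNat]
    _ = (Nat.factorial (l + m) : ℝ) * (2 ^ l * (Nat.factorial l : ℝ)) := by push_cast; ring
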